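/- Let X be a compact metric space, T : X → X a homeomorphism, Z a compact metric space, S : Z → Z a homeomorphism, π : X → Z a continuous equivariant surjection, and ε > 0. Then the set D_ε^π = {f ∈ C(X,[0,1]^d) : the map I_f × π : X → ([0,1]^d)^Z × Z is an ε-embedding} is open in C(X,[0,1]^d) with the supremum metric. -/

import Mathlib

/-!
By compactness of `{(x, x') | g x = g x'}`, a map `g` whose fibres have diameter `< ε`
identifies only points at distance `≤ m` for some `m < ε`. Choosing `m < δ < ε`, it separates
every pair in the compact set `{(x, x') | δ ≤ dist x x'}`, and by the tube lemma so does every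
map in a jointly continuous family close enough to `g`; the fibres of those maps then have
diameter `≤ δ`. The maps `I_f × π` form such a family, parametrized by `f`.
-/

open Function Metric

def IsEpsEmbedding {X Y : Type*} [PseudoMetricSpace X] (ε : ℝ) (g : X → Y) : Prop :=
  ∀ y, diam (g ⁻¹' {y}) < ε

theorem Homeomorph.toEquiv_zpow {X : Type*} [TopologicalSpace X] (T : X ≃ₜ X) (k : ℤ) :
    (T ^ k).toEquiv = T.toEquiv ^ k :=
  map_zpow (⟨⟨toEquiv, rfl⟩, fun _ _ => rfl⟩ : (X ≃ₜ X) →* Equiv.Perm X) T k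

theorem Homeomorph.continuous_toEquiv_zpow {X : Type*} [TopologicalSpace X] (T : X ≃ₜ X)
    (k : ℤ) : Continuous (T.toEquiv ^ k) := by
  rw [← T.toEquiv_zpow]
  exact (T ^ k).continuous

theorem isOpen_setOf_forall_ne_of_isCompact {A X Y : Type*} [TopologicalSpace A]
    [TopologicalSpace X] [TopologicalSpace Y] [T2Space Y] {Φ : A → X → Y}
    (hΦ : Continuous (uncurry Φ)) {K : Set (X × X)} (hK : IsCompact K) :
    IsOpen {a | ∀ p ∈ K, Φ a p.1 ≠ Φ a p.2} := by
  have : CompactSpace K := isCompact_iff_compactSpace.1 hK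
  have hval : Continuous fun q : A × K => (q.2 : X × X) :=
    continuous_subtype_val.comp continuous_snd
  have hC : IsClosed {q : A × K | Φ q.1 (q.2 : X × X).1 = Φ q.1 (q.2 : X × X).2} :=
    isClosed_eq (hΦ.comp (continuous_fst.prodMk hval.fst))
      (hΦ.comp (continuous_fst.prodMk hval.snd))
  convert (isClosedMap_fst_of_compactSpace _ hC).isOpen_compl using 1
  ext a
  simp

theorem IsEpsEmbedding.exists_forall_dist_le {X Y : Type*} [PseudoMetricSpace X]
    [CompactSpace X] [TopologicalSpace Y] [T2Space Y] {g : X → Y} {ε : ℝ}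
    (h : IsEpsEmbedding ε g) (hg : Continuous g) (hε : 0 < ε) :
    ∃ m < ε, 0 ≤ m ∧ ∀ x y, g x = g y → dist x y ≤ m := by
  rcases isEmpty_or_nonempty X with hX | ⟨⟨x₀⟩⟩
  · exact ⟨0, hε, le_rfl, fun x => isEmptyElim x⟩
  have hL : IsCompact {p : X × X | g p.1 = g p.2} :=
    (isClosed_eq (hg.comp continuous_fst) (hg.comp continuous_snd)).isCompact
  obtain ⟨p, hp, hmax⟩ := hL.exists_isMaxOn ⟨(x₀, x₀), rfl⟩
    (continuous_fst.dist continuous_snd).continuousOn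
  refine ⟨dist p.1 p.2, ?_, dist_nonneg, fun x y hxy => hmax (a := (x, y)) hxy⟩
  calc dist p.1 p.2 ≤ diam (g ⁻¹' {g p.1}) :=
        dist_le_diam_of_mem isBounded_of_compactSpace rfl hp.symm
    _ < ε := h _

theorem isOpen_setOf_isEpsEmbedding {A X Y : Type*} [TopologicalSpace A] [PseudoMetricSpace X]
    [CompactSpace X] [TopologicalSpace Y] [T2Space Y] {Φ : A → X → Y}
    (hΦ : Continuous (uncurry Φ)) {ε : ℝ} (hε : 0 < ε) :
    IsOpen {a | IsEpsEmbedding ε (Φ a)} := by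
  refine isOpen_iff_mem_nhds.2 fun a ha => ?_
  obtain ⟨m, hmε, hm, hfiber⟩ := IsEpsEmbedding.exists_forall_dist_le ha
    (hΦ.comp (Continuous.prodMk_right a)) hε
  obtain ⟨δ, hmδ, hδε⟩ := exists_between hmε
  have hK : IsCompact {p : X × X | δ ≤ dist p.1 p.2} :=
    (isClosed_le continuous_const (continuous_fst.dist continuous_snd)).isCompact
  have hsep : ∀ p ∈ {p : X × X | δ ≤ dist p.1 p.2}, Φ a p.1 ≠ Φ a p.2 := fun p hp heq =>
    (hmδ.trans_le hp).not_ge (hfiber _ _ heq)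
  filter_upwards [(isOpen_setOf_forall_ne_of_isCompact hΦ hK).mem_nhds hsep] with b hb y
  refine (diam_le_of_forall_dist_le (C := δ) (hm.trans hmδ.le) fun x hx x' hx' => ?_).trans_lt
    hδε
  by_contra! hlt
  exact hb (x, x') hlt.le (hx.trans hx'.symm)

theorem stmt_9_general {X Z : Type*} [MetricSpace X] [CompactSpace X]
    [MetricSpace Z] (d : ℕ)
    (T : X ≃ₜ X) (π : X → Z) (hπcont : Continuous π)
    (ε : ℝ) (hε : 0 < ε) :
    IsOpen {f : C(X, Fin d → Set.Icc (0 : ℝ) 1) |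
      ∀ z : (ℤ → (Fin d → Set.Icc (0 : ℝ) 1)) × Z,
        Metric.diam ((fun x : X => ((fun k : ℤ => f ((T.toEquiv ^ k) x)), π x)) ⁻¹' {z}) < ε} := by
  have hI : Continuous fun fx : C(X, Fin d → Set.Icc (0 : ℝ) 1) × X =>
      ((fun k : ℤ => fx.1 ((T.toEquiv ^ k) fx.2)), π fx.2) :=
    .prodMk (continuous_pi fun k => continuous_eval.comp
        (continuous_fst.prodMk ((T.continuous_toEquiv_zpow k).comp continuous_snd)))
      (hπcont.comp continuous_snd)
  exact isOpen_setOf_isEpsEmbedding hI hε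

theorem stmt_9 {X Z : Type*} [MetricSpace X] [CompactSpace X]
    [MetricSpace Z] [CompactSpace Z] (d : ℕ)
    (T : X ≃ₜ X) (S : Z ≃ₜ Z) (π : X → Z) (hπcont : Continuous π)
    (hπsurj : Function.Surjective π) (hπequiv : ∀ x, π (T x) = S (π x))
    (ε : ℝ) (hε : 0 < ε) :
    IsOpen {f : C(X, Fin d → Set.Icc (0 : ℝ) 1) |
      ∀ z : (ℤ → (Fin d → Set.Icc (0 : ℝ) 1)) × Z,
        Metric.diam ((fun x : X => ((fun k : ℤ => f ((T.toEquiv ^ k) x)), π x)) ⁻¹' {z}) < ε} :=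
  stmt_9_general d T π hπcont ε hε
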